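/- arXiv:1208.2905 — 6 statements merged into one kernel-verified Lean document; each statement's English description precedes it below -/
import Mathlib

section
/- Let a₂, d₃, β₁, β₂, β₃, β₄, β₅ ∈ ℂ with a₂ ≠ 0, and let g₃, g₄ : ℂ → ℂ be twice differentiable. Define v : ℂ⁴ → ℂ by v(z₁,w₁,z₂,w₂) = β₁ + (conj(a₂)·z₁ + a₂·w₁ + β₂)² + (z₁ + w₁ + z₂/(2·conj(a₂)) + w₂/(2·a₂) + β₃)² + g₃(w₁/(2·conj(a₂)) + conj(d₃)·w₂ + β₄) + g₄(z₁/(2·a₂) + d₃·z₂ + β₅). Then v satisfies the elliptic complex Monge–Ampère equation: (∂²v/∂z₁∂w₁)(∂²v/∂z₂∂w₂) − (∂²v/∂z₁∂w₂)(∂²v/∂z₂∂w₁) = 1 at every point of ℂ⁴. -/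
/-- Partial derivative with respect to the first argument. -/
noncomputable def pd1 (f : ℂ → ℂ → ℂ → ℂ → ℂ) (a b c d : ℂ) : ℂ :=
  deriv (fun s => f s b c d) a

/-- Partial derivative with respect to the second argument. -/
noncomputable def pd2 (f : ℂ → ℂ → ℂ → ℂ → ℂ) (a b c d : ℂ) : ℂ :=
  deriv (fun s => f a s c d) b

/-- Partial derivative with respect to the third argument. -/
noncomputable def pd3 (f : ℂ → ℂ → ℂ → ℂ → ℂ) (a b c d : ℂ) : ℂ :=
  deriv (fun s => f a b s d) c

/-- Partial derivative with respect to the fourth argument. -/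
noncomputable def pd4 (f : ℂ → ℂ → ℂ → ℂ → ℂ) (a b c d : ℂ) : ℂ :=
  deriv (fun s => f a b c s) d

/-!
Each of the four mixed second derivatives `∂²v/∂zᵢ∂wⱼ` only sees `v` as a function of two variables
`(s, t) = (zᵢ, wⱼ)`, and there `v` has the shape `c + p(s,t)² + q(s,t)² + φ(t) + ψ(s)` with `p, q`
affine. The `φ(t)` (from `g₃`) and `ψ(s)` (from `g₄`) terms have vanishing mixed derivative, and
`∂²(αs + βt + γ)²/∂s∂t = 2αβ`. This gives `v_{z₁w₁} = 2(|a₂|² + 1)`, `v_{z₂w₂} = 1/(2|a₂|²)`,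
`v_{z₁w₂} = 1/a₂`, `v_{z₂w₁} = 1/conj(a₂)`, whose determinant is `1`.
-/

section MixedDeriv

variable {𝕜 : Type*} [NontriviallyNormedField 𝕜]

noncomputable def mixedDeriv (F : 𝕜 → 𝕜 → 𝕜) (s₀ t₀ : 𝕜) : 𝕜 :=
  deriv (fun s => deriv (fun t => F s t) t₀) s₀

theorem mixedDeriv_eq_of_hasDerivAt {F : 𝕜 → 𝕜 → 𝕜} {D : 𝕜 → 𝕜} {s₀ t₀ d : 𝕜}
    (hinner : ∀ s, HasDerivAt (F s) (D s) t₀) (houter : HasDerivAt D d s₀) :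
    mixedDeriv F s₀ t₀ = d := by
  have hD : (fun s => deriv (fun t => F s t) t₀) = D := funext fun s => (hinner s).deriv
  rw [mixedDeriv, hD, houter.deriv]

theorem hasDerivAt_affine (α β x : 𝕜) : HasDerivAt (fun x => α * x + β) α x := by
  simpa using ((hasDerivAt_id x).const_mul α).add_const β

theorem hasDerivAt_affine_sq (α β x : 𝕜) :
    HasDerivAt (fun x => (α * x + β) ^ 2) (2 * (α * x + β) * α) x := by
  simpa using (hasDerivAt_affine α β x).fun_pow 2

theorem mixedDeriv_sq_add_sq_add {F : 𝕜 → 𝕜 → 𝕜} {φ ψ : 𝕜 → 𝕜} (c α₁ β₁ γ₁ α₂ β₂ γ₂ : 𝕜)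
    (hF : ∀ s t, F s t = c + (α₁ * s + β₁ * t + γ₁) ^ 2 + (α₂ * s + β₂ * t + γ₂) ^ 2 + φ t + ψ s)
    (s₀ t₀ : 𝕜) (hφ : DifferentiableAt 𝕜 φ t₀) :
    mixedDeriv F s₀ t₀ = 2 * (α₁ * β₁ + α₂ * β₂) := by
  apply mixedDeriv_eq_of_hasDerivAt
    (D := fun s => 2 * (β₁ * t₀ + (α₁ * s + γ₁)) * β₁ + 2 * (β₂ * t₀ + (α₂ * s + γ₂)) * β₂
      + deriv φ t₀)
  · intro s
    refine ((((hasDerivAt_affine_sq β₁ (α₁ * s + γ₁) t₀).add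
      (hasDerivAt_affine_sq β₂ (α₂ * s + γ₂) t₀)).add hφ.hasDerivAt).const_add c
      |>.add_const (ψ s)).congr_of_eventuallyEq (.of_forall fun t => ?_)
    simp only [hF, Pi.add_apply]
    ring
  · refine ((((hasDerivAt_affine α₁ (β₁ * t₀ + γ₁) s₀).const_mul (2 * β₁)).add
      ((hasDerivAt_affine α₂ (β₂ * t₀ + γ₂) s₀).const_mul (2 * β₂))).add_const
      (deriv φ t₀)).congr_of_eventuallyEq (.of_forall fun s => ?_) |>.congr_deriv (by ring)
    simp only [Pi.add_apply]
    ring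

end MixedDeriv

section PartialDerivs

variable (f : ℂ → ℂ → ℂ → ℂ → ℂ) (a b c d : ℂ)

theorem pd1_pd2_eq_mixedDeriv : pd1 (pd2 f) a b c d = mixedDeriv (fun s t => f s t c d) a b := rfl

theorem pd3_pd4_eq_mixedDeriv : pd3 (pd4 f) a b c d = mixedDeriv (fun s t => f a b s t) c d := rfl

theorem pd1_pd4_eq_mixedDeriv : pd1 (pd4 f) a b c d = mixedDeriv (fun s t => f s b c t) a d := rfl

theorem pd3_pd2_eq_mixedDeriv : pd3 (pd2 f) a b c d = mixedDeriv (fun s t => f a t s d) c b := rfl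

end PartialDerivs

theorem stmt0_general (a₂ d₃ β₁ β₂ β₃ β₄ β₅ : ℂ) (ha : a₂ ≠ 0)
    (g₃ g₄ : ℂ → ℂ) (hg₃ : ContDiff ℂ 2 g₃)
    (v : ℂ → ℂ → ℂ → ℂ → ℂ)
    (hv : v = fun z₁ w₁ z₂ w₂ =>
      β₁ + ((starRingEnd ℂ) a₂ * z₁ + a₂ * w₁ + β₂) ^ 2
        + (z₁ + w₁ + z₂ / (2 * (starRingEnd ℂ) a₂) + w₂ / (2 * a₂) + β₃) ^ 2
        + g₃ (w₁ / (2 * (starRingEnd ℂ) a₂) + (starRingEnd ℂ) d₃ * w₂ + β₄)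
        + g₄ (z₁ / (2 * a₂) + d₃ * z₂ + β₅)) :
    ∀ z₁ w₁ z₂ w₂ : ℂ,
      pd1 (pd2 v) z₁ w₁ z₂ w₂ * pd3 (pd4 v) z₁ w₁ z₂ w₂
        - pd1 (pd4 v) z₁ w₁ z₂ w₂ * pd3 (pd2 v) z₁ w₁ z₂ w₂ = 1 := by
  intro z₁ w₁ z₂ w₂
  set ā := (starRingEnd ℂ) a₂
  have hā : ā ≠ 0 := by simpa [ā] using ha
  have hg₃' : Differentiable ℂ g₃ := hg₃.differentiable (by norm_num)
  have h₁₂ := mixedDeriv_sq_add_sq_add (F := fun s t => v s t z₂ w₂)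
    (φ := fun t => g₃ (t / (2 * ā) + starRingEnd ℂ d₃ * w₂ + β₄))
    (ψ := fun s => g₄ (s / (2 * a₂) + d₃ * z₂ + β₅))
    β₁ ā a₂ β₂ 1 1 (z₂ / (2 * ā) + w₂ / (2 * a₂) + β₃)
    (fun s t => by simp only [hv]; ring) z₁ w₁ (hg₃'.comp (by fun_prop) _)
  have h₃₄ := mixedDeriv_sq_add_sq_add (F := fun s t => v z₁ w₁ s t)
    (φ := fun t => g₃ (w₁ / (2 * ā) + starRingEnd ℂ d₃ * t + β₄))
    (ψ := fun s => g₄ (z₁ / (2 * a₂) + d₃ * s + β₅))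
    β₁ 0 0 (ā * z₁ + a₂ * w₁ + β₂) (1 / (2 * ā)) (1 / (2 * a₂)) (z₁ + w₁ + β₃)
    (fun s t => by simp only [hv]; ring) z₂ w₂ (hg₃'.comp (by fun_prop) _)
  have h₁₄ := mixedDeriv_sq_add_sq_add (F := fun s t => v s w₁ z₂ t)
    (φ := fun t => g₃ (w₁ / (2 * ā) + starRingEnd ℂ d₃ * t + β₄))
    (ψ := fun s => g₄ (s / (2 * a₂) + d₃ * z₂ + β₅))
    β₁ ā 0 (a₂ * w₁ + β₂) 1 (1 / (2 * a₂)) (w₁ + z₂ / (2 * ā) + β₃)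
    (fun s t => by simp only [hv]; ring) z₁ w₂ (hg₃'.comp (by fun_prop) _)
  have h₃₂ := mixedDeriv_sq_add_sq_add (F := fun s t => v z₁ t s w₂)
    (φ := fun t => g₃ (t / (2 * ā) + starRingEnd ℂ d₃ * w₂ + β₄))
    (ψ := fun s => g₄ (z₁ / (2 * a₂) + d₃ * s + β₅))
    β₁ 0 a₂ (ā * z₁ + β₂) (1 / (2 * ā)) 1 (z₁ + w₂ / (2 * a₂) + β₃)
    (fun s t => by simp only [hv]; ring) z₂ w₁ (hg₃'.comp (by fun_prop) _)
  rw [pd1_pd2_eq_mixedDeriv, pd3_pd4_eq_mixedDeriv, pd1_pd4_eq_mixedDeriv,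
    pd3_pd2_eq_mixedDeriv, h₁₂, h₃₄, h₁₄, h₃₂]
  field_simp
  ring

/-- the ansatz solves the elliptic complex Monge–Ampère equation. -/
theorem stmt0 (a₂ d₃ β₁ β₂ β₃ β₄ β₅ : ℂ) (ha : a₂ ≠ 0)
    (g₃ g₄ : ℂ → ℂ) (hg₃ : ContDiff ℂ 2 g₃) (hg₄ : ContDiff ℂ 2 g₄)
    (v : ℂ → ℂ → ℂ → ℂ → ℂ)
    (hv : v = fun z₁ w₁ z₂ w₂ =>
      β₁ + ((starRingEnd ℂ) a₂ * z₁ + a₂ * w₁ + β₂) ^ 2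
        + (z₁ + w₁ + z₂ / (2 * (starRingEnd ℂ) a₂) + w₂ / (2 * a₂) + β₃) ^ 2
        + g₃ (w₁ / (2 * (starRingEnd ℂ) a₂) + (starRingEnd ℂ) d₃ * w₂ + β₄)
        + g₄ (z₁ / (2 * a₂) + d₃ * z₂ + β₅)) :
    ∀ z₁ w₁ z₂ w₂ : ℂ,
      pd1 (pd2 v) z₁ w₁ z₂ w₂ * pd3 (pd4 v) z₁ w₁ z₂ w₂
        - pd1 (pd4 v) z₁ w₁ z₂ w₂ * pd3 (pd2 v) z₁ w₁ z₂ w₂ = 1 :=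
  stmt0_general a₂ d₃ β₁ β₂ β₃ β₄ β₅ ha g₃ g₄ hg₃ v hv
end

section
/- Let A, a₂, d₁, d₂, d₄ ∈ ℝ with d₁·d₂ ≠ 0, let β₁,…,β₅ ∈ ℂ, and let g₁, g₂, g₃, g₄ : ℂ → ℂ be twice differentiable. Set a₃ = −a₂(d₁d₂ − d₂² − d₁d₄)/(d₁d₂), c₃ = −iA(d₁d₂ + d₂² + d₁d₄)/(d₁d₂), d₃ = −(d₁² − d₂² − d₁d₄)/d₂, and define u : ℂ⁴ → ℂ (variables (p,q,z,w)) by u = β₁ + g₁(a₂p + a₂q + a₃z + a₃w + β₂) + g₂(d₂p + d₁q + d₄z + d₃w + β₃) + g₃(−iAp + iAq + c₃z − c₃w + β₄) + g₄(d₁p + d₂q + d₃z + d₄w + β₅). Then u satisfies u_{pq}u_{zw} − u_{pw}u_{qz} − (u_{pq})² + u_{pp}u_{qq} = 0 at every point (class I of solutions of the Legendre-transformed hyperbolic complex Monge–Ampère equation). -/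
/-!
Each summand `g_k (⟪v_k, x⟫ + e_k)` of `u` has Hessian `g_k'' · v_k v_kᵀ`, so the Hessian of `u`
is a combination of the rank-one matrices `v_k v_kᵀ`. The Monge–Ampère expression is a quadratic
form in the Hessian that vanishes on rank-one matrices, so on such a combination only the cross
terms `g_k'' g_l''` survive, each weighted by the polarisation of the form at `v_k v_kᵀ` and
`v_l v_lᵀ`. The relations defining `a₃`, `c₃`, `d₃` are what make this weight vanish for each of
the six pairs of class I wave vectors.
-/

def mongeAmpereForm {R : Type*} [CommRing R] (H : Fin 4 → Fin 4 → R) : R :=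
  H 0 1 * H 2 3 - H 0 3 * H 1 2 - H 0 1 ^ 2 + H 0 0 * H 1 1

/-- `B(a aᵀ, b bᵀ)` for the bilinear form `B(H, K) = H₀₁K₂₃ - H₀₃K₁₂ - H₀₁K₀₁ + H₀₀K₁₁`,
whose diagonal is `mongeAmpereForm`. -/
def mongeAmpereCoupling {R : Type*} [CommRing R] (a b : Fin 4 → R) : R :=
  a 0 * a 1 * b 2 * b 3 - a 0 * a 3 * b 1 * b 2 - a 0 * a 1 * b 0 * b 1 + a 0 ^ 2 * b 1 ^ 2

def PairwiseMongeAmpereOrthogonal {R ι : Type*} [CommRing R] (v : ι → Fin 4 → R) : Prop :=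
  ∀ k l, mongeAmpereCoupling (v k) (v l) + mongeAmpereCoupling (v l) (v k) = 0

section Algebra

variable {R ι : Type*} [CommRing R] [Fintype ι]

theorem sum_sum_mul_eq_zero_of_antisymm [NoZeroDivisors R] [CharZero R] (x : ι → R)
    (c : ι → ι → R) (hc : ∀ k l, c k l + c l k = 0) :
    ∑ k, ∑ l, x k * x l * c k l = 0 := by
  rw [← add_self_eq_zero]
  nth_rw 2 [Finset.sum_comm]
  simp only [← Finset.sum_add_distrib]
  refine Finset.sum_eq_zero fun k _ => Finset.sum_eq_zero fun l _ => ?_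
  linear_combination x k * x l * hc k l

theorem mongeAmpereForm_sum_rankOne (G : ι → R) (v : ι → Fin 4 → R) :
    mongeAmpereForm (fun i j => ∑ k, v k i * (v k j * G k)) =
      ∑ k, ∑ l, G k * G l * mongeAmpereCoupling (v k) (v l) := by
  simp only [mongeAmpereForm, sq, Finset.sum_mul_sum, ← Finset.sum_sub_distrib,
    ← Finset.sum_add_distrib]
  refine Finset.sum_congr rfl fun k _ => Finset.sum_congr rfl fun l _ => ?_
  simp only [mongeAmpereCoupling]
  ring

theorem mongeAmpereForm_sum_rankOne_eq_zero [NoZeroDivisors R] [CharZero R] (G : ι → R)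
    {v : ι → Fin 4 → R} (hv : PairwiseMongeAmpereOrthogonal v) :
    mongeAmpereForm (fun i j => ∑ k, v k i * (v k j * G k)) = 0 :=
  (mongeAmpereForm_sum_rankOne G v).trans (sum_sum_mul_eq_zero_of_antisymm G _ hv)

end Algebra

section PlaneWaves

variable {ι : Type*} [Fintype ι]

def planeWaveSum (β : ℂ) (g : ι → ℂ → ℂ) (v : ι → Fin 4 → ℂ) (e : ι → ℂ) :
    ℂ → ℂ → ℂ → ℂ → ℂ :=
  fun p q z w => β + ∑ k, g k (v k 0 * p + v k 1 * q + v k 2 * z + v k 3 * w + e k)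

theorem deriv_const_add_sum_comp (β : ℂ) {g ℓ : ι → ℂ → ℂ} {c : ι → ℂ} {x : ℂ}
    (hg : ∀ k, DifferentiableAt ℂ (g k) (ℓ k x)) (hℓ : ∀ k, HasDerivAt (ℓ k) (c k) x) :
    deriv (fun s => β + ∑ k, g k (ℓ k s)) x = ∑ k, c k * deriv (g k) (ℓ k x) := by
  refine ((HasDerivAt.fun_sum fun k _ => ?_).const_add β).deriv
  rw [mul_comm]
  exact (hg k).hasDerivAt.comp x (hℓ k)

variable {g : ι → ℂ → ℂ} (β : ℂ) (v : ι → Fin 4 → ℂ) (e : ι → ℂ)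

theorem pd1_planeWaveSum (hg : ∀ k, Differentiable ℂ (g k)) :
    pd1 (planeWaveSum β g v e) = planeWaveSum 0 (fun k t => v k 0 * deriv (g k) t) v e := by
  funext p q z w
  simp only [pd1, planeWaveSum, zero_add]
  exact deriv_const_add_sum_comp β (fun k => hg k _) fun k => by
    simpa using (((((hasDerivAt_id p).const_mul (v k 0)).add_const (v k 1 * q)).add_const
      (v k 2 * z)).add_const (v k 3 * w)).add_const (e k)

theorem pd2_planeWaveSum (hg : ∀ k, Differentiable ℂ (g k)) :
    pd2 (planeWaveSum β g v e) = planeWaveSum 0 (fun k t => v k 1 * deriv (g k) t) v e := by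
  funext p q z w
  simp only [pd2, planeWaveSum, zero_add]
  exact deriv_const_add_sum_comp β (fun k => hg k _) fun k => by
    simpa using (((((hasDerivAt_id q).const_mul (v k 1)).const_add (v k 0 * p)).add_const
      (v k 2 * z)).add_const (v k 3 * w)).add_const (e k)

theorem pd3_planeWaveSum (hg : ∀ k, Differentiable ℂ (g k)) :
    pd3 (planeWaveSum β g v e) = planeWaveSum 0 (fun k t => v k 2 * deriv (g k) t) v e := by
  funext p q z w
  simp only [pd3, planeWaveSum, zero_add]
  exact deriv_const_add_sum_comp β (fun k => hg k _) fun k => by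
    simpa using ((((hasDerivAt_id z).const_mul (v k 2)).const_add
      (v k 0 * p + v k 1 * q)).add_const (v k 3 * w)).add_const (e k)

theorem pd4_planeWaveSum (hg : ∀ k, Differentiable ℂ (g k)) :
    pd4 (planeWaveSum β g v e) = planeWaveSum 0 (fun k t => v k 3 * deriv (g k) t) v e := by
  funext p q z w
  simp only [pd4, planeWaveSum, zero_add]
  exact deriv_const_add_sum_comp β (fun k => hg k _) fun k => by
    simpa using (((hasDerivAt_id w).const_mul (v k 3)).const_add
      (v k 0 * p + v k 1 * q + v k 2 * z)).add_const (e k)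

theorem mongeAmpere_planeWaveSum_eq_zero (hg : ∀ k, ContDiff ℂ 2 (g k))
    (hv : PairwiseMongeAmpereOrthogonal v) (p q z w : ℂ) :
    let u := planeWaveSum β g v e
    pd1 (pd2 u) p q z w * pd3 (pd4 u) p q z w - pd1 (pd4 u) p q z w * pd2 (pd3 u) p q z w
      - pd1 (pd2 u) p q z w ^ 2 + pd1 (pd1 u) p q z w * pd2 (pd2 u) p q z w = 0 := by
  have hg₁ : ∀ k, Differentiable ℂ (g k) := fun k => (hg k).differentiable two_ne_zero
  have hg₂ : ∀ i k, Differentiable ℂ (fun t => v k i * deriv (g k) t) :=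
    fun i k => (hg k).differentiable_deriv_two.const_mul _
  simp only [pd1_planeWaveSum _ _ _ hg₁, pd2_planeWaveSum _ _ _ hg₁,
    pd3_planeWaveSum _ _ _ hg₁, pd4_planeWaveSum _ _ _ hg₁,
    pd1_planeWaveSum _ _ _ (hg₂ _), pd2_planeWaveSum _ _ _ (hg₂ _),
    pd3_planeWaveSum _ _ _ (hg₂ _), deriv_const_mul_field', planeWaveSum, zero_add]
  exact mongeAmpereForm_sum_rankOne_eq_zero _ hv

end PlaneWaves

/-- The coefficient vectors of the arguments of `g₁, …, g₄`, with `s` standing for `i A`. -/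
def classIWaveVectors {K : Type*} [Field K] (a₂ d₁ d₂ d₄ s a₃ c₃ d₃ : K) : Fin 4 → Fin 4 → K :=
  ![![a₂, a₂, a₃, a₃], ![d₂, d₁, d₄, d₃], ![-s, s, c₃, -c₃], ![d₁, d₂, d₃, d₄]]

theorem classIWaveVectors_orthogonal {K : Type*} [Field K] {a₂ d₁ d₂ d₄ s a₃ c₃ d₃ : K}
    (hd₁ : d₁ ≠ 0) (hd₂ : d₂ ≠ 0)
    (ha₃ : a₃ = -a₂ * (d₁ * d₂ - d₂ ^ 2 - d₁ * d₄) / (d₁ * d₂))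
    (hc₃ : c₃ = -s * (d₁ * d₂ + d₂ ^ 2 + d₁ * d₄) / (d₁ * d₂))
    (hd₃ : d₃ = -(d₁ ^ 2 - d₂ ^ 2 - d₁ * d₄) / d₂) :
    PairwiseMongeAmpereOrthogonal (classIWaveVectors a₂ d₁ d₂ d₄ s a₃ c₃ d₃) := by
  subst ha₃ hc₃ hd₃
  intro k l
  fin_cases k <;> fin_cases l <;>
    simp only [mongeAmpereCoupling, classIWaveVectors, Fin.zero_eta, Fin.mk_one, Fin.reduceFinMk,
      Fin.isValue, Matrix.cons_val', Matrix.cons_val_zero, Matrix.cons_val_one,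
      Matrix.cons_val_fin_one, Matrix.cons_val] <;>
    field_simp <;> ring

/-- class I of solutions of the Legendre-transformed hyperbolic
complex Monge–Ampère equation. -/
theorem stmt3 (A a₂ d₁ d₂ d₄ : ℝ) (hd : d₁ * d₂ ≠ 0) (β₁ β₂ β₃ β₄ β₅ : ℂ)
    (g₁ g₂ g₃ g₄ : ℂ → ℂ)
    (hg₁ : ContDiff ℂ 2 g₁) (hg₂ : ContDiff ℂ 2 g₂)
    (hg₃ : ContDiff ℂ 2 g₃) (hg₄ : ContDiff ℂ 2 g₄)
    (a₃ d₃ : ℝ) (c₃ : ℂ)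
    (ha₃ : a₃ = -a₂ * (d₁ * d₂ - d₂ ^ 2 - d₁ * d₄) / (d₁ * d₂))
    (hc₃ : c₃ = -Complex.I * (A : ℂ) * ((d₁ : ℂ) * d₂ + (d₂ : ℂ) ^ 2 + (d₁ : ℂ) * d₄)
        / ((d₁ : ℂ) * d₂))
    (hd₃ : d₃ = -(d₁ ^ 2 - d₂ ^ 2 - d₁ * d₄) / d₂)
    (u : ℂ → ℂ → ℂ → ℂ → ℂ)
    (hu : u = fun p q z w =>
      β₁ + g₁ ((a₂ : ℂ) * p + (a₂ : ℂ) * q + (a₃ : ℂ) * z + (a₃ : ℂ) * w + β₂)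
        + g₂ ((d₂ : ℂ) * p + (d₁ : ℂ) * q + (d₄ : ℂ) * z + (d₃ : ℂ) * w + β₃)
        + g₃ (-Complex.I * (A : ℂ) * p + Complex.I * (A : ℂ) * q + c₃ * z - c₃ * w + β₄)
        + g₄ ((d₁ : ℂ) * p + (d₂ : ℂ) * q + (d₃ : ℂ) * z + (d₄ : ℂ) * w + β₅)) :
    ∀ p q z w : ℂ,
      pd1 (pd2 u) p q z w * pd3 (pd4 u) p q z w
        - pd1 (pd4 u) p q z w * pd2 (pd3 u) p q z w
        - (pd1 (pd2 u) p q z w) ^ 2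
        + pd1 (pd1 u) p q z w * pd2 (pd2 u) p q z w = 0 := by
  have hd₁ : (d₁ : ℂ) ≠ 0 := Complex.ofReal_ne_zero.mpr (left_ne_zero_of_mul hd)
  have hd₂ : (d₂ : ℂ) ≠ 0 := Complex.ofReal_ne_zero.mpr (right_ne_zero_of_mul hd)
  have hv : PairwiseMongeAmpereOrthogonal
      (classIWaveVectors (a₂ : ℂ) d₁ d₂ d₄ (Complex.I * A) a₃ c₃ d₃) :=
    classIWaveVectors_orthogonal hd₁ hd₂ (by rw [ha₃]; push_cast; ring) (by rw [hc₃]; ring)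
      (by rw [hd₃]; push_cast; ring)
  have hg : ∀ k, ContDiff ℂ 2 (![g₁, g₂, g₃, g₄] k) := by
    intro k; fin_cases k <;> assumption
  have hu' : u = planeWaveSum β₁ ![g₁, g₂, g₃, g₄]
      (classIWaveVectors (a₂ : ℂ) d₁ d₂ d₄ (Complex.I * A) a₃ c₃ d₃) ![β₂, β₃, β₄, β₅] := by
    funext p q z w
    simp only [hu, planeWaveSum, classIWaveVectors, Fin.sum_univ_four, Matrix.cons_val]
    ring_nf
  rw [hu']
  exact mongeAmpere_planeWaveSum_eq_zero β₁ _ _ hg hv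
end

section
/- Let a₄, b₄ ∈ ℂ, d₃, d₄ ∈ ℝ, β₁,…,β₅ ∈ ℂ, and let g₁, g₂, g₃, g₄ : ℂ → ℂ be twice differentiable. Define u : ℂ⁴ → ℂ (variables (p,q,z,w)) by u = β₁ + g₁(conj(a₄)·z + a₄·w + β₂) + g₂(conj(b₄)·z + b₄·w + β₃) + g₃(d₄q + d₄z + d₃w + β₄) + g₄(d₄p + d₃z + d₄w + β₅). Then u satisfies u_{pq}u_{zw} − u_{pw}u_{qz} − (u_{pq})² + u_{pp}u_{qq} = 0 at every point (class II of solutions of the Legendre-transformed hyperbolic complex Monge–Ampère equation). -/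
/-!
Write `u = χ(z, w) + φ(q + z, w) + ψ(p + w, z)`. No summand depends on both `p` and `q`, so
`u_pq = 0`. The only summand depending on `p` is a function of `p + w`, so `∂_w` and `∂_p` agree on
it and `u_pw = u_pp`; likewise `u_qz = u_qq`. The equation then reads
`0 - u_pp u_qq - 0 + u_pp u_qq = 0`.
-/

noncomputable def legendreMongeAmpere (u : ℂ → ℂ → ℂ → ℂ → ℂ) (p q z w : ℂ) : ℂ :=
  pd1 (pd2 u) p q z w * pd3 (pd4 u) p q z w
    - pd1 (pd4 u) p q z w * pd2 (pd3 u) p q z w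
    - (pd1 (pd2 u) p q z w) ^ 2
    + pd1 (pd1 u) p q z w * pd2 (pd2 u) p q z w

theorem pd1_pd2_eq_zero_of_eq_add {u : ℂ → ℂ → ℂ → ℂ → ℂ} (A B : ℂ → ℂ → ℂ → ℂ)
    (hu : ∀ p q z w, u p q z w = A q z w + B p z w) (p q z w : ℂ) :
    pd1 (pd2 u) p q z w = 0 := by
  have h : ∀ s, pd2 u s q z w = deriv (fun t => A t z w) q := fun s => by
    simp only [pd2, hu, deriv_add_const]
  simp only [pd1, h, deriv_const]

theorem pd1_pd4_eq_pd1_pd1 {u : ℂ → ℂ → ℂ → ℂ → ℂ} (C : ℂ → ℂ → ℂ → ℂ) (ψ : ℂ → ℂ → ℂ)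
    (hC : ∀ q z, Differentiable ℂ (C q z)) (hψ : ∀ z, Differentiable ℂ (ψ · z))
    (hu : ∀ p q z w, u p q z w = C q z w + ψ (p + w) z) (p q z w : ℂ) :
    pd1 (pd4 u) p q z w = pd1 (pd1 u) p q z w := by
  have h : ∀ s, pd4 u s q z w = deriv (C q z) w + pd1 u s q z w := fun s => by
    simp only [pd4, pd1, hu, deriv_const_add]
    have hψw : DifferentiableAt ℂ (fun t => ψ (s + t) z) w :=
      (hψ z).differentiableAt.comp w (by fun_prop)
    rw [deriv_fun_add (hC q z w) hψw, deriv_comp_const_add (ψ · z), deriv_comp_add_const (ψ · z)]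
  simp only [pd1, h, deriv_const_add]

theorem pd2_pd3_eq_pd2_pd2 {u : ℂ → ℂ → ℂ → ℂ → ℂ} (D : ℂ → ℂ → ℂ → ℂ) (φ : ℂ → ℂ → ℂ)
    (hD : ∀ p w, Differentiable ℂ (D p · w)) (hφ : ∀ w, Differentiable ℂ (φ · w))
    (hu : ∀ p q z w, u p q z w = D p z w + φ (q + z) w) (p q z w : ℂ) :
    pd2 (pd3 u) p q z w = pd2 (pd2 u) p q z w := by
  have h : ∀ s, pd3 u p s z w = deriv (D p · w) z + pd2 u p s z w := fun s => by
    simp only [pd3, pd2, hu, deriv_const_add]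
    have hφz : DifferentiableAt ℂ (fun t => φ (s + t) w) z :=
      (hφ w).differentiableAt.comp z (by fun_prop)
    rw [deriv_fun_add (hD p w z) hφz, deriv_comp_const_add (φ · w), deriv_comp_add_const (φ · w)]
  simp only [pd2, h, deriv_const_add]

theorem legendreMongeAmpere_eq_zero {u : ℂ → ℂ → ℂ → ℂ → ℂ} (χ φ ψ : ℂ → ℂ → ℂ)
    (hχ₁ : ∀ w, Differentiable ℂ (χ · w)) (hχ₂ : ∀ z, Differentiable ℂ (χ z))
    (hφ₁ : ∀ w, Differentiable ℂ (φ · w)) (hφ₂ : ∀ t, Differentiable ℂ (φ t))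
    (hψ₁ : ∀ z, Differentiable ℂ (ψ · z)) (hψ₂ : ∀ t, Differentiable ℂ (ψ t))
    (hu : ∀ p q z w, u p q z w = χ z w + φ (q + z) w + ψ (p + w) z) (p q z w : ℂ) :
    legendreMongeAmpere u p q z w = 0 := by
  have hpq := pd1_pd2_eq_zero_of_eq_add _ _ hu p q z w
  have hpw := pd1_pd4_eq_pd1_pd1 (fun q z w => χ z w + φ (q + z) w) ψ
    (fun q z => (hχ₂ z).add (hφ₂ (q + z))) hψ₁ hu p q z w
  have hqz := pd2_pd3_eq_pd2_pd2 (fun p z w => χ z w + ψ (p + w) z) φ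
    (fun p w => (hχ₁ w).add (hψ₂ (p + w))) hφ₁
    (fun p q z w => (hu p q z w).trans (add_right_comm _ _ _)) p q z w
  rw [legendreMongeAmpere, hpq, hpw, hqz]
  ring

/-- class II of solutions of the Legendre-transformed hyperbolic
complex Monge–Ampère equation. -/
theorem stmt4 (a₄ b₄ : ℂ) (d₃ d₄ : ℝ) (β₁ β₂ β₃ β₄ β₅ : ℂ)
    (g₁ g₂ g₃ g₄ : ℂ → ℂ)
    (hg₁ : ContDiff ℂ 2 g₁) (hg₂ : ContDiff ℂ 2 g₂)
    (hg₃ : ContDiff ℂ 2 g₃) (hg₄ : ContDiff ℂ 2 g₄)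
    (u : ℂ → ℂ → ℂ → ℂ → ℂ)
    (hu : u = fun p q z w =>
      β₁ + g₁ ((starRingEnd ℂ) a₄ * z + a₄ * w + β₂)
        + g₂ ((starRingEnd ℂ) b₄ * z + b₄ * w + β₃)
        + g₃ ((d₄ : ℂ) * q + (d₄ : ℂ) * z + (d₃ : ℂ) * w + β₄)
        + g₄ ((d₄ : ℂ) * p + (d₃ : ℂ) * z + (d₄ : ℂ) * w + β₅)) :
    ∀ p q z w : ℂ,
      pd1 (pd2 u) p q z w * pd3 (pd4 u) p q z w
        - pd1 (pd4 u) p q z w * pd2 (pd3 u) p q z w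
        - (pd1 (pd2 u) p q z w) ^ 2
        + pd1 (pd1 u) p q z w * pd2 (pd2 u) p q z w = 0 := by
  have h₁ := hg₁.differentiable two_ne_zero
  have h₂ := hg₂.differentiable two_ne_zero
  have h₃ := hg₃.differentiable two_ne_zero
  have h₄ := hg₄.differentiable two_ne_zero
  refine legendreMongeAmpere_eq_zero
    (fun z w => β₁ + g₁ ((starRingEnd ℂ) a₄ * z + a₄ * w + β₂)
      + g₂ ((starRingEnd ℂ) b₄ * z + b₄ * w + β₃))
    (fun t w => g₃ ((d₄ : ℂ) * t + (d₃ : ℂ) * w + β₄))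
    (fun t z => g₄ ((d₄ : ℂ) * t + (d₃ : ℂ) * z + β₅))
    (by fun_prop) (by fun_prop) (by fun_prop) (by fun_prop) (by fun_prop) (by fun_prop)
    fun p q z w => ?_
  subst hu
  ring_nf
end

section
/- Let A, a₂, d₁, d₂, d₄ be elements of ℂ with d₁d₂ ≠ 0, set a₃ = −a₂(d₁d₂−d₂²−d₁d₄)/(d₁d₂), c₃ = −iA(d₁d₂+d₂²+d₁d₄)/(d₁d₂), d₃ = −(d₁²−d₂²−d₁d₄)/d₂, and let G₁, G₂, G₃, G₄ ∈ ℂ (values of first derivatives of functions g₁,…,g₄). Let M be the 4×4 matrix with rows (a₂G₁, a₂G₁, a₃G₁, a₃G₁), (d₂G₂, d₁G₂, d₄G₂, d₃G₂), (−iA·G₃, iA·G₃, c₃G₃, −c₃G₃), (d₁G₄, d₂G₄, d₃G₄, d₄G₄). Then det M = (2i·a₂·A/(d₁²d₂²))·(d₁⁶ − d₂⁶ − 3d₁⁴d₂² + 3d₁²d₂⁴)·G₁G₂G₃G₄. -/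
/-!
Factoring `G_j` out of row `j` leaves a coefficient matrix in which the third row is `x = iA` times a
row free of `A`. Expanding its determinant and clearing the denominators `d₁ d₂`, every term
involving `d₄` cancels and what remains is `2 x a₂ (d₁² - d₂²)³ / (d₁ d₂)²`.
-/

open Matrix

def classICoefficients {K : Type*} [Field K] (a₂ x d₁ d₂ d₄ : K) :
    Matrix (Fin 4) (Fin 4) K :=
  let a₃ := -a₂ * (d₁ * d₂ - d₂ ^ 2 - d₁ * d₄) / (d₁ * d₂)
  let c₃ := -x * (d₁ * d₂ + d₂ ^ 2 + d₁ * d₄) / (d₁ * d₂)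
  let d₃ := -(d₁ ^ 2 - d₂ ^ 2 - d₁ * d₄) / d₂
  !![a₂, a₂, a₃, a₃;
     d₂, d₁, d₄, d₃;
     -x, x, c₃, -c₃;
     d₁, d₂, d₃, d₄]

theorem det_classICoefficients {K : Type*} [Field K] (a₂ x d₁ d₂ d₄ : K) (hd : d₁ * d₂ ≠ 0) :
    (classICoefficients a₂ x d₁ d₂ d₄).det =
      2 * x * a₂ / (d₁ ^ 2 * d₂ ^ 2) * (d₁ ^ 2 - d₂ ^ 2) ^ 3 := by
  have hd₁ : d₁ ≠ 0 := left_ne_zero_of_mul hd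
  have hd₂ : d₂ ≠ 0 := right_ne_zero_of_mul hd
  rw [classICoefficients, det_succ_row_zero]
  simp only [Fin.sum_univ_four, det_fin_three, submatrix_apply, of_apply, cons_val, Fin.succAbove,
    Fin.isValue, Fin.reduceCastSucc, Fin.reduceSucc, Fin.reduceLT, ite_true, ite_false,
    Fin.coe_ofNat_eq_mod]
  field_simp
  ring

/-- determinant of the Jacobian matrix of the class I ansatz for
the Legendre-transformed hyperbolic complex Monge–Ampère equation. -/
theorem stmt7 (A a₂ d₁ d₂ d₄ : ℂ) (hd : d₁ * d₂ ≠ 0)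
    (a₃ c₃ d₃ : ℂ)
    (ha₃ : a₃ = -a₂ * (d₁ * d₂ - d₂ ^ 2 - d₁ * d₄) / (d₁ * d₂))
    (hc₃ : c₃ = -Complex.I * A * (d₁ * d₂ + d₂ ^ 2 + d₁ * d₄) / (d₁ * d₂))
    (hd₃ : d₃ = -(d₁ ^ 2 - d₂ ^ 2 - d₁ * d₄) / d₂)
    (G₁ G₂ G₃ G₄ : ℂ)
    (M : Matrix (Fin 4) (Fin 4) ℂ)
    (hM : M = !![a₂ * G₁, a₂ * G₁, a₃ * G₁, a₃ * G₁;
                 d₂ * G₂, d₁ * G₂, d₄ * G₂, d₃ * G₂;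
                 -Complex.I * A * G₃, Complex.I * A * G₃, c₃ * G₃, -c₃ * G₃;
                 d₁ * G₄, d₂ * G₄, d₃ * G₄, d₄ * G₄]) :
    M.det = (2 * Complex.I * a₂ * A / (d₁ ^ 2 * d₂ ^ 2))
        * (d₁ ^ 6 - d₂ ^ 6 - 3 * d₁ ^ 4 * d₂ ^ 2 + 3 * d₁ ^ 2 * d₂ ^ 4)
        * G₁ * G₂ * G₃ * G₄ := by
  have hrows : M = of fun i j =>
      ![G₁, G₂, G₃, G₄] i * classICoefficients a₂ (Complex.I * A) d₁ d₂ d₄ i j := by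
    subst hM ha₃ hc₃ hd₃
    ext i j
    fin_cases i <;> fin_cases j <;> simp [classICoefficients] <;> ring
  rw [hrows, det_mul_column, Fin.prod_univ_four, det_classICoefficients _ _ _ _ _ hd]
  simp only [cons_val]
  ring
end

section
/- Let n ∈ ℕ, let α_j, γ_j ∈ ℂ be nonzero for j = 1,…,n, let β_j ∈ ℂ, and let g_j : ℂ → ℂ be twice differentiable. Set ζ_j = γ_j²/α_j and λ_j = −α_j²/γ_j, and define ϑ : ℂ⁴ → ℂ (variables (x,r,t,z)) by ϑ = Σ_{j=1}^{n} g_j(α_j x + γ_j r + ζ_j t + λ_j z + β_j). Then ϑ satisfies the higher-symmetry system: ϑ_{rr} − ϑ_{xt} = 0, ϑ_{rx} + ϑ_{tz} = 0, and ϑ_{xx} + ϑ_{rz} = 0 at every point (subclass I). -/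
theorem hasDerivAt_sum_mul_comp {𝕜 ι : Type*} [NontriviallyNormedField 𝕜] [Fintype ι]
    {c k : ι → 𝕜} {h u : ι → 𝕜 → 𝕜} {s : 𝕜} (hh : ∀ j, Differentiable 𝕜 (h j))
    (hu : ∀ j, HasDerivAt (u j) (k j) s) :
    HasDerivAt (fun s => ∑ j, c j * h j (u j s)) (∑ j, c j * k j * deriv (h j) (u j s)) s :=
  HasDerivAt.fun_sum fun j _ =>
    (((hh j (u j s)).hasDerivAt.comp s (hu j)).const_mul (c j)).congr_deriv (by ring)

section WaveSum

variable {ι : Type*} [Fintype ι]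

noncomputable def waveSum (c : ι → ℂ) (h : ι → ℂ → ℂ) (α γ ζ lam β : ι → ℂ) :
    ℂ → ℂ → ℂ → ℂ → ℂ :=
  fun x r t z => ∑ j, c j * h j (α j * x + γ j * r + ζ j * t + lam j * z + β j)

variable {h : ι → ℂ → ℂ} {c α γ ζ lam β : ι → ℂ}

theorem pd1_waveSum (hh : ∀ j, Differentiable ℂ (h j)) :
    pd1 (waveSum c h α γ ζ lam β) =
      waveSum (fun j => c j * α j) (fun j => deriv (h j)) α γ ζ lam β := by
  funext x r t z
  exact (hasDerivAt_sum_mul_comp hh fun j =>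
    ((((hasDerivAt_const_mul (α j)).add_const _).add_const _).add_const _).add_const _).deriv

theorem pd2_waveSum (hh : ∀ j, Differentiable ℂ (h j)) :
    pd2 (waveSum c h α γ ζ lam β) =
      waveSum (fun j => c j * γ j) (fun j => deriv (h j)) α γ ζ lam β := by
  funext x r t z
  exact (hasDerivAt_sum_mul_comp hh fun j =>
    ((((hasDerivAt_const_mul (γ j)).const_add _).add_const _).add_const _).add_const _).deriv

theorem pd3_waveSum (hh : ∀ j, Differentiable ℂ (h j)) :
    pd3 (waveSum c h α γ ζ lam β) =
      waveSum (fun j => c j * ζ j) (fun j => deriv (h j)) α γ ζ lam β := by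
  funext x r t z
  exact (hasDerivAt_sum_mul_comp hh fun j =>
    (((hasDerivAt_const_mul (ζ j)).const_add _).add_const _).add_const _).deriv

theorem pd4_waveSum (hh : ∀ j, Differentiable ℂ (h j)) :
    pd4 (waveSum c h α γ ζ lam β) =
      waveSum (fun j => c j * lam j) (fun j => deriv (h j)) α γ ζ lam β := by
  funext x r t z
  exact (hasDerivAt_sum_mul_comp hh fun j =>
    ((hasDerivAt_const_mul (lam j)).const_add _).add_const _).deriv

end WaveSum

/-- the functional-sum ansatz (subclass I) solves the
higher-symmetry system arising from the Legendre-transformed second heavenly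
equation. -/
theorem stmt11 (n : ℕ) (α γ : Fin n → ℂ)
    (hα : ∀ j, α j ≠ 0) (hγ : ∀ j, γ j ≠ 0) (β : Fin n → ℂ)
    (g : Fin n → ℂ → ℂ) (hg : ∀ j, ContDiff ℂ 2 (g j))
    (ζ lam : Fin n → ℂ)
    (hζ : ∀ j, ζ j = (γ j) ^ 2 / α j)
    (hlam : ∀ j, lam j = -((α j) ^ 2 / γ j))
    (ϑ : ℂ → ℂ → ℂ → ℂ → ℂ)
    (hϑ : ϑ = fun x r t z =>
      ∑ j : Fin n, g j (α j * x + γ j * r + ζ j * t + lam j * z + β j)) :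
    ∀ x r t z : ℂ,
      pd2 (pd2 ϑ) x r t z - pd1 (pd3 ϑ) x r t z = 0
      ∧ pd2 (pd1 ϑ) x r t z + pd3 (pd4 ϑ) x r t z = 0
      ∧ pd1 (pd1 ϑ) x r t z + pd2 (pd4 ϑ) x r t z = 0 := by
  intro x r t z
  have hϑ' : ϑ = waveSum 1 g α γ ζ lam β := by
    rw [hϑ]; unfold waveSum; simp only [Pi.one_apply, one_mul]
  have hg1 : ∀ j, Differentiable ℂ (g j) := fun j => (hg j).differentiable two_ne_zero
  have hg2 : ∀ j, Differentiable ℂ (deriv (g j)) := fun j =>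
    (hg j).differentiable_deriv_two
  simp only [hϑ', pd1_waveSum hg1, pd2_waveSum hg1, pd3_waveSum hg1, pd4_waveSum hg1,
    pd1_waveSum hg2, pd2_waveSum hg2, pd3_waveSum hg2, waveSum,
    ← Finset.sum_sub_distrib, ← Finset.sum_add_distrib]
  refine ⟨?_, ?_, ?_⟩ <;> refine Finset.sum_eq_zero fun j _ => ?_ <;>
    rw [hζ j, hlam j] <;> field_simp [hα j, hγ j] <;> ring
end

section
/- Let w be a twice continuously differentiable function of four variables (η,ξ,q,y) satisfying, at every point, the linear system w_{ηη} + w_{ξξ} − w_{ξq} = 0, w_{ξq} − w_{ηq} + w_{ξy} = 0, w_{ξq} + w_{ηq} − w_{qq} + w_{ηy} = 0. Define W(p,t,q,y) = w(p+t, p−t, q, y). Then W satisfies the Legendre-transformed mixed heavenly equation with θ = 1: W_{tq}W_{py} − W_{pq}W_{ty} + W_{tt}W_{qq} − (W_{tq})² + W_{pp}W_{qq} − (W_{pq})² = 0 at every point. -/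
section

variable {𝕜 E F G : Type*} [NontriviallyNormedField 𝕜] [NormedAddCommGroup E] [NormedSpace 𝕜 E]
  [NormedAddCommGroup F] [NormedSpace 𝕜 F] [NormedAddCommGroup G] [NormedSpace 𝕜 G]

theorem fderiv_fderiv_apply_const {f : E → F} {x : E} (hf : DifferentiableAt 𝕜 (fderiv 𝕜 f) x)
    (u v : E) : fderiv 𝕜 (fun y => fderiv 𝕜 f y u) x v = fderiv 𝕜 (fderiv 𝕜 f) x v u := by
  simp [fderiv_clm_apply hf (differentiableAt_const u)]

theorem fderiv_fderiv_comp_continuousLinearMap {f : E → F} (hf : ContDiff 𝕜 2 f) (L : G →L[𝕜] E)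
    (x u v : G) :
    fderiv 𝕜 (fderiv 𝕜 (f ∘ L)) x v u = fderiv 𝕜 (fderiv 𝕜 f) (L x) (L v) (L u) := by
  simpa [iteratedFDeriv_two_apply] using
    congrArg (· ![v, u]) (L.iteratedFDeriv_comp_right hf x le_rfl)

end

theorem bilinear_heavenly_identity {R M : Type*} [CommRing R] [AddCommGroup M] [Module R M]
    (D : M →ₗ[R] M →ₗ[R] R) (a b c d : M)
    (h1 : D a a + D b b - D b c = 0) (h2 : D b c - D a c + D b d = 0)
    (h3 : D b c + D a c - D c c + D a d = 0) :
    D (a - b) c * D (a + b) d - D (a + b) c * D (a - b) d + D (a - b) (a - b) * D c c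
      - D (a - b) c ^ 2 + D (a + b) (a + b) * D c c - D (a + b) c ^ 2 = 0 := by
  simp only [map_add, map_sub, LinearMap.add_apply, LinearMap.sub_apply]
  linear_combination 2 * D a c * h2 - 2 * D b c * h3 + 2 * D c c * h1

def uncurry4 (f : ℂ → ℂ → ℂ → ℂ → ℂ) (x : ℂ × ℂ × ℂ × ℂ) : ℂ :=
  f x.1 x.2.1 x.2.2.1 x.2.2.2

def IsDerivAlong (P : (ℂ → ℂ → ℂ → ℂ → ℂ) → ℂ → ℂ → ℂ → ℂ → ℂ) (v : ℂ × ℂ × ℂ × ℂ) :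
    Prop :=
  ∀ f, Differentiable ℂ (uncurry4 f) → uncurry4 (P f) = fun x => fderiv ℂ (uncurry4 f) x v

theorem isDerivAlong_pd1 : IsDerivAlong pd1 (1, 0, 0, 0) :=
  fun _ hf => funext fun ⟨a, b, c, d⟩ =>
  have hγ : HasDerivAt (fun s : ℂ => (s, b, c, d)) (1, 0, 0, 0) a :=
    (hasDerivAt_id a).prodMk (hasDerivAt_const a _)
  ((hf _).hasFDerivAt.comp_hasDerivAt a hγ).deriv

theorem isDerivAlong_pd2 : IsDerivAlong pd2 (0, 1, 0, 0) :=
  fun _ hf => funext fun ⟨a, b, c, d⟩ =>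
  have hγ : HasDerivAt (fun s : ℂ => (a, s, c, d)) (0, 1, 0, 0) b :=
    (hasDerivAt_const b a).prodMk ((hasDerivAt_id b).prodMk (hasDerivAt_const b _))
  ((hf _).hasFDerivAt.comp_hasDerivAt b hγ).deriv

theorem isDerivAlong_pd3 : IsDerivAlong pd3 (0, 0, 1, 0) :=
  fun _ hf => funext fun ⟨a, b, c, d⟩ =>
  have hγ : HasDerivAt (fun s : ℂ => (a, b, s, d)) (0, 0, 1, 0) c :=
    (hasDerivAt_const c a).prodMk ((hasDerivAt_const c b).prodMk
      ((hasDerivAt_id c).prodMk (hasDerivAt_const c d)))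
  ((hf _).hasFDerivAt.comp_hasDerivAt c hγ).deriv

theorem isDerivAlong_pd4 : IsDerivAlong pd4 (0, 0, 0, 1) :=
  fun _ hf => funext fun ⟨a, b, c, d⟩ =>
  have hγ : HasDerivAt (fun s : ℂ => (a, b, c, s)) (0, 0, 0, 1) d :=
    (hasDerivAt_const d a).prodMk ((hasDerivAt_const d b).prodMk
      ((hasDerivAt_const d c).prodMk (hasDerivAt_id d)))
  ((hf _).hasFDerivAt.comp_hasDerivAt d hγ).deriv

noncomputable def sumDiff : (ℂ × ℂ × ℂ × ℂ) →L[ℂ] ℂ × ℂ × ℂ × ℂ :=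
  LinearMap.toContinuousLinearMap
    { toFun := fun x => (x.1 + x.2.1, x.1 - x.2.1, x.2.2)
      map_add' := fun x y => by ext <;> simp only [Prod.fst_add, Prod.snd_add] <;> ring
      map_smul' := fun c x => by ext <;> simp [mul_add, mul_sub] }

theorem uncurry4_comp_sumDiff (f : ℂ → ℂ → ℂ → ℂ → ℂ) :
    uncurry4 (fun p t q y => f (p + t) (p - t) q y) = uncurry4 f ∘ sumDiff := rfl

theorem sumDiff_basis_p : sumDiff (1, 0, 0, 0) = (1, 0, 0, 0) + (0, 1, 0, 0) := by
  simp [sumDiff]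

theorem sumDiff_basis_t : sumDiff (0, 1, 0, 0) = (1, 0, 0, 0) - (0, 1, 0, 0) := by
  simp [sumDiff]

theorem sumDiff_basis_q : sumDiff (0, 0, 1, 0) = (0, 0, 1, 0) := by
  simp [sumDiff]

theorem sumDiff_basis_y : sumDiff (0, 0, 0, 1) = (0, 0, 0, 1) := by
  simp [sumDiff]

section

variable {P Q : (ℂ → ℂ → ℂ → ℂ → ℂ) → ℂ → ℂ → ℂ → ℂ → ℂ} {u v : ℂ × ℂ × ℂ × ℂ}
  {f : ℂ → ℂ → ℂ → ℂ → ℂ}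

theorem IsDerivAlong.comp_apply (hP : IsDerivAlong P u) (hQ : IsDerivAlong Q v)
    (hf : ContDiff ℂ 2 (uncurry4 f)) (a b c d : ℂ) :
    Q (P f) a b c d = fderiv ℂ (fderiv ℂ (uncurry4 f)) (a, b, c, d) v u := by
  have hdf : Differentiable ℂ (fderiv ℂ (uncurry4 f)) :=
    (hf.fderiv_right le_rfl).differentiable one_ne_zero
  have hPf := hP f (hf.differentiable two_ne_zero)
  have hQPf := hQ (P f) (hPf ▸ hdf.clm_apply (differentiable_const u))
  rw [hPf] at hQPf
  exact (congrFun hQPf (a, b, c, d)).trans (fderiv_fderiv_apply_const (hdf _) u v)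

theorem IsDerivAlong.comp_sumDiff_apply (hP : IsDerivAlong P u) (hQ : IsDerivAlong Q v)
    (hf : ContDiff ℂ 2 (uncurry4 f)) (p t q y : ℂ) :
    Q (P fun p t q y => f (p + t) (p - t) q y) p t q y =
      fderiv ℂ (fderiv ℂ (uncurry4 f)) (p + t, p - t, q, y) (sumDiff v) (sumDiff u) := by
  have hfL := uncurry4_comp_sumDiff f ▸ hf.comp sumDiff.contDiff
  rw [hP.comp_apply hQ hfL, uncurry4_comp_sumDiff, fderiv_fderiv_comp_continuousLinearMap hf]
  rfl

end

/-- any twice continuously differentiable solution of the linear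
system gives, after the substitution `η = p + t`, `ξ = p − t`, a solution of the
Legendre-transformed mixed heavenly equation with `θ = 1`. -/
theorem stmt17 (w : ℂ → ℂ → ℂ → ℂ → ℂ)
    (hw : ContDiff ℂ 2 (fun p : ℂ × ℂ × ℂ × ℂ => w p.1 p.2.1 p.2.2.1 p.2.2.2))
    (h1 : ∀ η ξ q y : ℂ,
      pd1 (pd1 w) η ξ q y + pd2 (pd2 w) η ξ q y - pd2 (pd3 w) η ξ q y = 0)
    (h2 : ∀ η ξ q y : ℂ,
      pd2 (pd3 w) η ξ q y - pd1 (pd3 w) η ξ q y + pd2 (pd4 w) η ξ q y = 0)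
    (h3 : ∀ η ξ q y : ℂ,
      pd2 (pd3 w) η ξ q y + pd1 (pd3 w) η ξ q y - pd3 (pd3 w) η ξ q y
        + pd1 (pd4 w) η ξ q y = 0)
    (W : ℂ → ℂ → ℂ → ℂ → ℂ)
    (hW : W = fun p t q y => w (p + t) (p - t) q y) :
    ∀ p t q y : ℂ,
      pd2 (pd3 W) p t q y * pd1 (pd4 W) p t q y
        - pd1 (pd3 W) p t q y * pd2 (pd4 W) p t q y
        + pd2 (pd2 W) p t q y * pd3 (pd3 W) p t q y
        - (pd2 (pd3 W) p t q y) ^ 2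
        + pd1 (pd1 W) p t q y * pd3 (pd3 W) p t q y
        - (pd1 (pd3 W) p t q y) ^ 2 = 0 := by
  subst hW
  intro p t q y
  have hessw {P Q u v} (hP : IsDerivAlong P u) (hQ : IsDerivAlong Q v) :=
    hP.comp_apply hQ hw (p + t) (p - t) q y
  have hessW {P Q u v} (hP : IsDerivAlong P u) (hQ : IsDerivAlong Q v) :=
    hP.comp_sumDiff_apply hQ hw p t q y
  have h1' := h1 (p + t) (p - t) q y
  have h2' := h2 (p + t) (p - t) q y
  have h3' := h3 (p + t) (p - t) q y
  simp only [hessw isDerivAlong_pd1 isDerivAlong_pd1, hessw isDerivAlong_pd2 isDerivAlong_pd2,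
    hessw isDerivAlong_pd3 isDerivAlong_pd2, hessw isDerivAlong_pd3 isDerivAlong_pd1,
    hessw isDerivAlong_pd4 isDerivAlong_pd2, hessw isDerivAlong_pd3 isDerivAlong_pd3,
    hessw isDerivAlong_pd4 isDerivAlong_pd1] at h1' h2' h3'
  rw [hessW isDerivAlong_pd3 isDerivAlong_pd2, hessW isDerivAlong_pd4 isDerivAlong_pd1,
    hessW isDerivAlong_pd3 isDerivAlong_pd1, hessW isDerivAlong_pd4 isDerivAlong_pd2,
    hessW isDerivAlong_pd2 isDerivAlong_pd2, hessW isDerivAlong_pd3 isDerivAlong_pd3,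
    hessW isDerivAlong_pd1 isDerivAlong_pd1, sumDiff_basis_p, sumDiff_basis_t,
    sumDiff_basis_q, sumDiff_basis_y]
  exact bilinear_heavenly_identity
    ((ContinuousLinearMap.coeLM ℂ).comp (fderiv ℂ (fderiv ℂ (uncurry4 w)) _).toLinearMap)
    _ _ _ _ h1' h2' h3'
end
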